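/- arXiv:1410.7660 — 3 statements merged into one kernel-verified Lean document; each statement's English description precedes it below -/
import Mathlib

section
/- With notation as in the eigendecomposition identity (A = L* + E symmetric, P_k(A) = UΛUᵀ, remaining part ŨΛ̃Ũᵀ, Λ invertible), one has ‖L* U Λ^{-1} Uᵀ L* − L*‖₂ ≤ 3‖E‖₂ + ‖E‖₂²/|λ_k| + |λ_{k+1}|, where λ_k is the smallest (in absolute value) of the top-k eigenvalues of A and λ_{k+1} the largest (in absolute value) of the remaining eigenvalues. -/
open Matrix

/-- The spectral (operator) norm of a real matrix. -/
noncomputable def specNorm {m n : Type*} [Fintype m] [Fintype n] [DecidableEq n]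
    (A : Matrix m n ℝ) : ℝ :=
  ‖LinearMap.toContinuousLinearMap (Matrix.toEuclideanLin A)‖


open scoped Matrix.Norms.L2Operator

private lemma diag_norm_le {p : ℕ} (d : Fin p → ℝ) (c : ℝ) (hc0 : 0 ≤ c) (hc : ∀ i, |d i| ≤ c) :
    ‖(Matrix.diagonal d : Matrix (Fin p) (Fin p) ℝ)‖ ≤ c := by
  rw [Matrix.l2_opNorm_def]
  refine ContinuousLinearMap.opNorm_le_bound _ hc0 fun x => ?_
  simp only [LinearEquiv.trans_apply, LinearMap.coe_toContinuousLinearMap']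
  rw [EuclideanSpace.norm_eq, EuclideanSpace.norm_eq]
  have key : ∀ i, ‖(Matrix.toEuclideanLin (Matrix.diagonal d) x) i‖ ^ 2
      ≤ c ^ 2 * ‖x i‖ ^ 2 := by
    intro i
    have : (Matrix.toEuclideanLin (Matrix.diagonal d) x) i = d i * x i := by
      rw [Matrix.toEuclideanLin_apply]
      simp [Matrix.mulVec_diagonal]
    rw [this]
    simp only [Real.norm_eq_abs, abs_mul, mul_pow]
    have h1 : |d i| ^ 2 ≤ c ^ 2 := by
      have := hc i; nlinarith [abs_nonneg (d i), abs_nonneg (x i)]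
    nlinarith [sq_nonneg (|x i|), abs_nonneg (x i)]
  calc Real.sqrt (∑ i, ‖(Matrix.toEuclideanLin (Matrix.diagonal d) x) i‖ ^ 2)
      ≤ Real.sqrt (∑ i, c ^ 2 * ‖x i‖ ^ 2) :=
        Real.sqrt_le_sqrt (Finset.sum_le_sum fun i _ => key i)
    _ = c * Real.sqrt (∑ i, ‖x i‖ ^ 2) := by
        rw [← Finset.mul_sum, Real.sqrt_mul (sq_nonneg c), Real.sqrt_sq hc0]

private lemma onb_norm_le_one {p q : ℕ} (U : Matrix (Fin p) (Fin q) ℝ) (h : Uᵀ * U = 1) :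
    ‖U‖ ≤ 1 := by
  have h2 : ‖U‖ * ‖U‖ = ‖(1 : Matrix (Fin q) (Fin q) ℝ)‖ := by
    rw [← Matrix.l2_opNorm_conjTranspose_mul_self, Matrix.conjTranspose_eq_transpose_of_trivial, h]
  have h3 : ‖(1 : Matrix (Fin q) (Fin q) ℝ)‖ * ‖(1 : Matrix (Fin q) (Fin q) ℝ)‖
      = ‖(1 : Matrix (Fin q) (Fin q) ℝ)‖ := by
    have := Matrix.l2_opNorm_conjTranspose_mul_self (1 : Matrix (Fin q) (Fin q) ℝ)
    simpa using this.symm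
  nlinarith [norm_nonneg U, norm_nonneg (1 : Matrix (Fin q) (Fin q) ℝ),
    mul_self_nonneg (‖U‖ - 1), mul_self_nonneg (‖(1 : Matrix (Fin q) (Fin q) ℝ)‖ - 1)]

/-- Spectral-norm bound for the leading term in the perturbation expansion:
with `A = L + E` symmetric, `P_k(A) = U Λ Uᵀ` the top-`k` part and `Ũ Λ̃ Ũᵀ` the
remaining part, `Λ` invertible,
`‖L U Λ⁻¹ Uᵀ L − L‖₂ ≤ 3‖E‖₂ + ‖E‖₂²/|λ_k| + |λ_{k+1}|`,
where `|λ_k| = min_i |Λ i i|` and `|λ_{k+1}| = max_j |Λ̃ j j|`. -/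
theorem leading_term_specNorm_bound {n k l : ℕ}
    (A L E : Matrix (Fin n) (Fin n) ℝ)
    (U : Matrix (Fin n) (Fin k) ℝ) (Ut : Matrix (Fin n) (Fin l) ℝ)
    (Lam : Matrix (Fin k) (Fin k) ℝ) (Lamt : Matrix (Fin l) (Fin l) ℝ)
    (dLam : Fin k → ℝ) (dLamt : Fin l → ℝ)
    (hLam : Lam = Matrix.diagonal dLam) (hLamt : Lamt = Matrix.diagonal dLamt)
    (hA : A = U * Lam * Uᵀ + Ut * Lamt * Utᵀ)
    (hUU : Uᵀ * U = 1) (hUtUt : Utᵀ * Ut = 1) (hUUt : Uᵀ * Ut = 0)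
    (htop : ∀ (i : Fin k) (j : Fin l), |dLamt j| ≤ |dLam i|)
    (hLsym : Lᵀ = L) (hAsym : Aᵀ = A)
    (hE : E = A - L)
    (hinv : IsUnit Lam) :
    specNorm (L * U * Lam⁻¹ * Uᵀ * L - L) ≤
      3 * specNorm E + (specNorm E) ^ 2 / (⨅ i, |dLam i|) + (⨆ j, |dLamt j|) := by
  classical
  have hspec : ∀ {a b : ℕ} (B : Matrix (Fin a) (Fin b) ℝ), specNorm B = ‖B‖ := fun _ => rfl
  have hdet : IsUnit Lam.det := (Matrix.isUnit_iff_isUnit_det _).1 hinv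
  have hLamInv : Lam⁻¹ * Lam = 1 := Matrix.nonsing_inv_mul _ hdet
  have hLamInv' : Lam * Lam⁻¹ = 1 := Matrix.mul_nonsing_inv _ hdet
  have hne : ∀ j : Fin k, dLam j ≠ 0 := by
    intro j hj
    have hdet' := hdet
    rw [hLam, Matrix.det_diagonal] at hdet'
    exact hdet'.ne_zero (Finset.prod_eq_zero (Finset.mem_univ j) hj)
  have hUtU : Utᵀ * U = (0 : Matrix (Fin l) (Fin k) ℝ) := by
    have := congrArg Matrix.transpose hUUt
    simpa [Matrix.transpose_mul] using this
  have hL : L = A - E := by rw [hE]; abel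
  have hAU : A * U = U * Lam := by
    rw [hA, Matrix.add_mul, Matrix.mul_assoc (U * Lam), hUU, Matrix.mul_one,
      Matrix.mul_assoc (Ut * Lamt), hUtU, Matrix.mul_zero, add_zero]
  have hUA : Uᵀ * A = Lam * Uᵀ := by
    rw [hA, Matrix.mul_add, ← Matrix.mul_assoc, ← Matrix.mul_assoc, hUU, Matrix.one_mul,
      ← Matrix.mul_assoc, ← Matrix.mul_assoc, hUUt, Matrix.zero_mul, Matrix.zero_mul, add_zero]
  have hLU : L * U = U * Lam - E * U := by rw [hL, Matrix.sub_mul, hAU]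
  have hUL : Uᵀ * L = Lam * Uᵀ - Uᵀ * E := by rw [hL, Matrix.mul_sub, hUA]
  have key : L * U * Lam⁻¹ * Uᵀ * L - L =
      E - U * (Uᵀ * E) - E * U * Uᵀ + E * U * (Lam⁻¹ * (Uᵀ * E)) - Ut * Lamt * Utᵀ := by
    have e1 : L * U * Lam⁻¹ * Uᵀ * L = (L * U) * (Lam⁻¹ * (Uᵀ * L)) := by
      simp only [Matrix.mul_assoc]
    have e2 : Lam⁻¹ * (Lam * Uᵀ - Uᵀ * E) = Uᵀ - Lam⁻¹ * (Uᵀ * E) := by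
      rw [Matrix.mul_sub, ← Matrix.mul_assoc, hLamInv, Matrix.one_mul]
    have e3 : U * Lam * (Lam⁻¹ * (Uᵀ * E)) = U * (Uᵀ * E) := by
      rw [Matrix.mul_assoc U Lam, ← Matrix.mul_assoc Lam, hLamInv', Matrix.one_mul]
    rw [e1, hLU, hUL, e2, Matrix.sub_mul, Matrix.mul_sub, Matrix.mul_sub, e3,
      Matrix.mul_assoc E U]
    rw [hL, hA]
    abel
  have hm0 : (0:ℝ) ≤ ⨅ i, |dLam i| := Real.iInf_nonneg fun i => abs_nonneg _
  have hM0 : (0:ℝ) ≤ ⨆ j, |dLamt j| := Real.iSup_nonneg fun j => abs_nonneg _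
  have hinvLam : Lam⁻¹ = Matrix.diagonal (fun i => (dLam i)⁻¹) := by
    apply Matrix.inv_eq_right_inv
    rw [hLam, Matrix.diagonal_mul_diagonal]
    have : (fun i => dLam i * (dLam i)⁻¹) = fun _ : Fin k => (1:ℝ) :=
      funext fun i => mul_inv_cancel₀ (hne i)
    rw [this]
    simp [Matrix.diagonal_one]
  have hLamInvNorm : ‖Lam⁻¹‖ ≤ (⨅ i, |dLam i|)⁻¹ := by
    rw [hinvLam]
    refine diag_norm_le _ _ (inv_nonneg.2 hm0) fun i => ?_
    have : Nonempty (Fin k) := ⟨i⟩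
    obtain ⟨i₀, hi₀⟩ := Finite.exists_min fun j => |dLam j|
    have hmpos : 0 < ⨅ j, |dLam j| :=
      lt_of_lt_of_le (abs_pos.2 (hne i₀)) (le_ciInf hi₀)
    rw [abs_inv]
    exact inv_anti₀ hmpos (ciInf_le (Set.Finite.bddBelow (Set.finite_range _)) i)
  have hLamtNorm : ‖Lamt‖ ≤ ⨆ j, |dLamt j| := by
    rw [hLamt]
    exact diag_norm_le _ _ hM0 fun j =>
      le_ciSup (f := fun j => |dLamt j|) (Set.Finite.bddAbove (Set.finite_range _)) j
  have nU : ‖U‖ ≤ 1 := onb_norm_le_one U hUU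
  have nUt : ‖Ut‖ ≤ 1 := onb_norm_le_one Ut hUtUt
  have nUT : ‖Uᵀ‖ ≤ 1 := by
    rw [← Matrix.conjTranspose_eq_transpose_of_trivial, Matrix.l2_opNorm_conjTranspose]; exact nU
  have nUtT : ‖Utᵀ‖ ≤ 1 := by
    rw [← Matrix.conjTranspose_eq_transpose_of_trivial, Matrix.l2_opNorm_conjTranspose]; exact nUt
  have c1 : ‖E * U‖ ≤ ‖E‖ := by
    calc ‖E * U‖ ≤ ‖E‖ * ‖U‖ := Matrix.l2_opNorm_mul _ _
      _ ≤ ‖E‖ * 1 := mul_le_mul_of_nonneg_left nU (norm_nonneg _)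
      _ = ‖E‖ := mul_one _
  have c2 : ‖Uᵀ * E‖ ≤ ‖E‖ := by
    calc ‖Uᵀ * E‖ ≤ ‖Uᵀ‖ * ‖E‖ := Matrix.l2_opNorm_mul _ _
      _ ≤ 1 * ‖E‖ := mul_le_mul_of_nonneg_right nUT (norm_nonneg _)
      _ = ‖E‖ := one_mul _
  have b1 : ‖U * (Uᵀ * E)‖ ≤ ‖E‖ := by
    calc ‖U * (Uᵀ * E)‖ ≤ ‖U‖ * ‖Uᵀ * E‖ := Matrix.l2_opNorm_mul _ _
      _ ≤ 1 * ‖E‖ := mul_le_mul nU c2 (norm_nonneg _) zero_le_one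
      _ = ‖E‖ := one_mul _
  have b2 : ‖E * U * Uᵀ‖ ≤ ‖E‖ := by
    calc ‖E * U * Uᵀ‖ ≤ ‖E * U‖ * ‖Uᵀ‖ := Matrix.l2_opNorm_mul _ _
      _ ≤ ‖E‖ * 1 := mul_le_mul c1 nUT (norm_nonneg _) (norm_nonneg _)
      _ = ‖E‖ := mul_one _
  have b3 : ‖E * U * (Lam⁻¹ * (Uᵀ * E))‖ ≤ ‖E‖ ^ 2 / (⨅ i, |dLam i|) := by
    calc ‖E * U * (Lam⁻¹ * (Uᵀ * E))‖ ≤ ‖E * U‖ * ‖Lam⁻¹ * (Uᵀ * E)‖ :=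
          Matrix.l2_opNorm_mul _ _
      _ ≤ ‖E * U‖ * (‖Lam⁻¹‖ * ‖Uᵀ * E‖) :=
          mul_le_mul_of_nonneg_left (Matrix.l2_opNorm_mul _ _) (norm_nonneg _)
      _ ≤ ‖E‖ * ((⨅ i, |dLam i|)⁻¹ * ‖E‖) := by
          refine mul_le_mul c1 ?_ (by positivity) (norm_nonneg _)
          exact mul_le_mul hLamInvNorm c2 (norm_nonneg _) (inv_nonneg.2 hm0)
      _ = ‖E‖ ^ 2 / (⨅ i, |dLam i|) := by rw [div_eq_mul_inv]; ring
  have b4 : ‖Ut * Lamt * Utᵀ‖ ≤ ⨆ j, |dLamt j| := by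
    calc ‖Ut * Lamt * Utᵀ‖ ≤ ‖Ut * Lamt‖ * ‖Utᵀ‖ := Matrix.l2_opNorm_mul _ _
      _ ≤ ‖Ut‖ * ‖Lamt‖ * 1 :=
          mul_le_mul (Matrix.l2_opNorm_mul _ _) nUtT (norm_nonneg _)
            (mul_nonneg (norm_nonneg _) (norm_nonneg _))
      _ ≤ 1 * (⨆ j, |dLamt j|) * 1 :=
          mul_le_mul_of_nonneg_right
            (mul_le_mul nUt hLamtNorm (norm_nonneg _) zero_le_one) zero_le_one
      _ = ⨆ j, |dLamt j| := by ring
  rw [hspec, hspec, key]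
  have tri : ‖E - U * (Uᵀ * E) - E * U * Uᵀ + E * U * (Lam⁻¹ * (Uᵀ * E)) - Ut * Lamt * Utᵀ‖
      ≤ ‖E‖ + ‖U * (Uᵀ * E)‖ + ‖E * U * Uᵀ‖ + ‖E * U * (Lam⁻¹ * (Uᵀ * E))‖
        + ‖Ut * Lamt * Utᵀ‖ := by
    have t1 := norm_sub_le (E - U * (Uᵀ * E) - E * U * Uᵀ + E * U * (Lam⁻¹ * (Uᵀ * E)))
      (Ut * Lamt * Utᵀ)
    have t2 := norm_add_le (E - U * (Uᵀ * E) - E * U * Uᵀ) (E * U * (Lam⁻¹ * (Uᵀ * E)))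
    have t3 := norm_sub_le (E - U * (Uᵀ * E)) (E * U * Uᵀ)
    have t4 := norm_sub_le E (U * (Uᵀ * E))
    linarith
  linarith
end

section
/- Let A = L* + E be symmetric with P_k(A) = UΛUᵀ and remaining part ŨΛ̃Ũᵀ, and suppose Λ is invertible. Then for all integers p, q ≥ 1 with s = p + q, ‖L* U Λ^{-(s+1)} Uᵀ L*‖₂ ≤ |λ_k|^{-(s-1)} (1 + ‖E‖₂/|λ_k|)². -/
/-!
Since `A U = U Λ` and `Uᵀ A = Λ Uᵀ`, writing `L = A - E` gives `L U Λ⁻¹ = U - E U Λ⁻¹` and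
`Λ⁻¹ Uᵀ L = Uᵀ - Λ⁻¹ Uᵀ E`. Hence `L U Λ^{-(s+1)} Uᵀ L` factors as
`(U - E U Λ⁻¹) Λ^{-(s-1)} (Uᵀ - Λ⁻¹ Uᵀ E)` (the four-term expansion, regrouped). As `U` is an
isometry and `‖Λ⁻¹‖₂ = 1/|λ_k|`, the outer factors have norm at most `1 + ‖E‖₂/|λ_k|` and the
middle one at most `|λ_k|^{-(s-1)}`.
-/

open Matrix

open scoped Matrix.Norms.L2Operator

section Algebra

variable {n k R : Type*} [Fintype n] [Fintype k] [DecidableEq k] [CommRing R]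

lemma mul_eq_mul_of_orthogonal_decomposition {l : Type*} [Fintype l]
    {A : Matrix n n R} {U : Matrix n k R} {Ut : Matrix n l R} {Λ : Matrix k k R}
    {Λt : Matrix l l R} (hA : A = U * Λ * Uᵀ + Ut * Λt * Utᵀ) (hUU : Uᵀ * U = 1)
    (hUUt : Uᵀ * Ut = 0) : A * U = U * Λ ∧ Uᵀ * A = Λ * Uᵀ := by
  have hUtU : Utᵀ * U = 0 := by
    rw [← transpose_transpose U, ← transpose_mul, hUUt, transpose_zero]
  constructor
  · rw [hA, Matrix.add_mul, Matrix.mul_assoc _ Uᵀ, hUU, Matrix.mul_assoc _ Utᵀ, hUtU,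
      Matrix.mul_one, Matrix.mul_zero, add_zero]
  · rw [hA, Matrix.mul_add, ← Matrix.mul_assoc Uᵀ, ← Matrix.mul_assoc Uᵀ, hUU,
      ← Matrix.mul_assoc Uᵀ, ← Matrix.mul_assoc Uᵀ, hUUt, Matrix.one_mul, Matrix.zero_mul,
      Matrix.zero_mul, add_zero]

lemma sub_mul_mul_inv_pow_mul_mul_sub {A E : Matrix n n R} {U : Matrix n k R}
    {V : Matrix k n R} {Λ : Matrix k k R} (hΛ : IsUnit Λ) (hAU : A * U = U * Λ)
    (hVA : V * A = Λ * V) (j : ℕ) :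
    (A - E) * U * Λ⁻¹ ^ (j + 2) * V * (A - E) =
      (U - E * U * Λ⁻¹) * Λ⁻¹ ^ j * (V - Λ⁻¹ * V * E) := by
  have hdet := (isUnit_iff_isUnit_det Λ).mp hΛ
  have hleft : (A - E) * U * Λ⁻¹ = U - E * U * Λ⁻¹ := by
    rw [Matrix.sub_mul, Matrix.sub_mul, hAU, Matrix.mul_assoc, mul_nonsing_inv _ hdet,
      Matrix.mul_one]
  have hright : Λ⁻¹ * V * (A - E) = V - Λ⁻¹ * V * E := by
    rw [Matrix.mul_sub, Matrix.mul_assoc, hVA, ← Matrix.mul_assoc, nonsing_inv_mul _ hdet,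
      Matrix.one_mul]
  rw [← hleft, ← hright, pow_succ, pow_succ']
  simp only [Matrix.mul_assoc]

lemma inv_diagonal_of_ne_zero {K : Type*} [Field K] {d : k → K} (hd : ∀ i, d i ≠ 0) :
    (diagonal d)⁻¹ = diagonal d⁻¹ :=
  inv_eq_right_inv <| by simp [diagonal_mul_diagonal, hd]

end Algebra

section L2OpNorm

variable {m n : Type*} [Fintype m] [Fintype n] [DecidableEq n]

lemma specNorm_eq_l2_opNorm (A : Matrix m n ℝ) : specNorm A = ‖A‖ := rfl

namespace Matrix

lemma l2_opNorm_transpose [DecidableEq m] (A : Matrix m n ℝ) : ‖Aᵀ‖ = ‖A‖ := by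
  rw [← conjTranspose_eq_transpose_of_trivial, l2_opNorm_conjTranspose]

lemma l2_opNorm_le_one_of_transpose_mul_self {U : Matrix m n ℝ} (hU : Uᵀ * U = 1) :
    ‖U‖ ≤ 1 := by
  have h := l2_opNorm_conjTranspose_mul_self U
  rw [conjTranspose_eq_transpose_of_trivial, hU, ← diagonal_one, l2_opNorm_diagonal] at h
  have h1 : ‖fun _ : n => (1 : ℝ)‖ ≤ 1 := (pi_norm_const_le (1 : ℝ)).trans_eq norm_one
  nlinarith [norm_nonneg U]

lemma l2_opNorm_inv_diagonal_le {d : n → ℝ} (hd : ∀ i, d i ≠ 0) :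
    ‖(diagonal d)⁻¹‖ ≤ (⨅ i, |d i|)⁻¹ := by
  rw [inv_diagonal_of_ne_zero hd, l2_opNorm_diagonal]
  refine (pi_norm_le_iff_of_nonneg (inv_nonneg.mpr (Real.iInf_nonneg fun _ => abs_nonneg _))).mpr
    fun i => ?_
  have : Nonempty n := ⟨i⟩
  obtain ⟨i₀, hi₀⟩ := exists_eq_ciInf_of_finite (f := fun i => |d i|)
  rw [Pi.inv_apply, norm_inv, Real.norm_eq_abs, ← hi₀]
  exact inv_anti₀ (abs_pos.mpr (hd i₀)) (hi₀ ▸ ciInf_le (Finite.bddBelow_range _) i)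

lemma l2_opNorm_sub_mul_mul_le {o p : Type*} [Fintype o] [Fintype p] [DecidableEq m]
    [DecidableEq o] [DecidableEq p] (X : Matrix m n ℝ) (Y : Matrix m o ℝ) (Z : Matrix o p ℝ)
    (W : Matrix p n ℝ) : ‖X - Y * Z * W‖ ≤ ‖X‖ + ‖Y‖ * ‖Z‖ * ‖W‖ := by
  calc ‖X - Y * Z * W‖ ≤ ‖X‖ + ‖Y * Z * W‖ := norm_sub_le _ _
    _ ≤ ‖X‖ + ‖Y * Z‖ * ‖W‖ := by gcongr; exact l2_opNorm_mul _ _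
    _ ≤ ‖X‖ + ‖Y‖ * ‖Z‖ * ‖W‖ := by gcongr; exact l2_opNorm_mul _ _

end Matrix

end L2OpNorm

theorem higher_term_specNorm_bound_general {n k l : ℕ}
    (A L E : Matrix (Fin n) (Fin n) ℝ)
    (U : Matrix (Fin n) (Fin k) ℝ) (Ut : Matrix (Fin n) (Fin l) ℝ)
    (Lam : Matrix (Fin k) (Fin k) ℝ) (Lamt : Matrix (Fin l) (Fin l) ℝ)
    (dLam : Fin k → ℝ)
    (hLam : Lam = Matrix.diagonal dLam)
    (hA : A = U * Lam * Uᵀ + Ut * Lamt * Utᵀ)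
    (hUU : Uᵀ * U = 1) (hUUt : Uᵀ * Ut = 0)
    (hE : E = A - L)
    (hinv : IsUnit Lam) :
    ∀ p q : ℕ, 1 ≤ p → 1 ≤ q →
      specNorm (L * U * (Lam⁻¹) ^ (p + q + 1) * Uᵀ * L) ≤
        (1 / (⨅ i, |dLam i|)) ^ (p + q - 1) *
          (1 + specNorm E / (⨅ i, |dLam i|)) ^ 2 := by
  intro p q hp hq
  set r := (⨅ i, |dLam i|)⁻¹
  obtain ⟨hAU, hUA⟩ := mul_eq_mul_of_orthogonal_decomposition hA hUU hUUt
  have hd : ∀ i, dLam i ≠ 0 := fun i =>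
    (Pi.isUnit_iff.mp (isUnit_diagonal.mp (hLam ▸ hinv)) i).ne_zero
  have hM : ‖Lam⁻¹‖ ≤ r := hLam ▸ l2_opNorm_inv_diagonal_le hd
  have hU : ‖U‖ ≤ 1 := l2_opNorm_le_one_of_transpose_mul_self hUU
  have hUt : ‖Uᵀ‖ ≤ 1 := (l2_opNorm_transpose U).trans_le hU
  have hL : L = A - E := by rw [hE, sub_sub_cancel]
  rw [specNorm_eq_l2_opNorm, specNorm_eq_l2_opNorm, one_div, div_eq_mul_inv,
    show p + q + 1 = p + q - 1 + 2 by omega, hL, sub_mul_mul_inv_pow_mul_mul_sub hinv hAU hUA]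
  calc _ ≤ ‖U - E * U * Lam⁻¹‖ * ‖Lam⁻¹ ^ (p + q - 1)‖ * ‖Uᵀ - Lam⁻¹ * Uᵀ * E‖ :=
        (l2_opNorm_mul _ _).trans (mul_le_mul_of_nonneg_right (l2_opNorm_mul _ _) (norm_nonneg _))
    _ ≤ (1 + ‖E‖ * 1 * r) * r ^ (p + q - 1) * (1 + r * 1 * ‖E‖) := by
        have hr : 0 ≤ r := (norm_nonneg _).trans hM
        gcongr
        · exact (l2_opNorm_sub_mul_mul_le _ _ _ _).trans (by gcongr)
        · exact (norm_pow_le' _ (by omega)).trans (by gcongr)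
        · exact (l2_opNorm_sub_mul_mul_le _ _ _ _).trans (by gcongr)
    _ = r ^ (p + q - 1) * (1 + ‖E‖ * r) ^ 2 := by ring

/-- Spectral-norm bound for the higher-order terms in the perturbation
expansion: with `A = L + E` symmetric, `P_k(A) = U Λ Uᵀ` the top-`k` part and
`Ũ Λ̃ Ũᵀ` the remaining part, `Λ` invertible, for all `p, q ≥ 1` with `s = p+q`,
`‖L U Λ^{-(s+1)} Uᵀ L‖₂ ≤ |λ_k|^{-(s-1)} (1 + ‖E‖₂/|λ_k|)²`,
where `|λ_k| = min_i |Λ i i|`. -/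
theorem higher_term_specNorm_bound {n k l : ℕ}
    (A L E : Matrix (Fin n) (Fin n) ℝ)
    (U : Matrix (Fin n) (Fin k) ℝ) (Ut : Matrix (Fin n) (Fin l) ℝ)
    (Lam : Matrix (Fin k) (Fin k) ℝ) (Lamt : Matrix (Fin l) (Fin l) ℝ)
    (dLam : Fin k → ℝ) (dLamt : Fin l → ℝ)
    (hLam : Lam = Matrix.diagonal dLam) (hLamt : Lamt = Matrix.diagonal dLamt)
    (hA : A = U * Lam * Uᵀ + Ut * Lamt * Utᵀ)
    (hUU : Uᵀ * U = 1) (hUtUt : Utᵀ * Ut = 1) (hUUt : Uᵀ * Ut = 0)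
    (htop : ∀ (i : Fin k) (j : Fin l), |dLamt j| ≤ |dLam i|)
    (hLsym : Lᵀ = L) (hAsym : Aᵀ = A)
    (hE : E = A - L)
    (hinv : IsUnit Lam) :
    ∀ p q : ℕ, 1 ≤ p → 1 ≤ q →
      specNorm (L * U * (Lam⁻¹) ^ (p + q + 1) * Uᵀ * L) ≤
        (1 / (⨅ i, |dLam i|)) ^ (p + q - 1) *
          (1 + specNorm E / (⨅ i, |dLam i|)) ^ 2 :=
  higher_term_specNorm_bound_general A L E U Ut Lam Lamt dLam hLam hA hUU hUUt hE hinv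
end

section
/- For n ≥ r ≥ 1, consider the n×n block-diagonal matrix L consisting of r diagonal blocks, each equal to the (n/r)×(n/r) all-ones matrix (assume r divides n). Then L has rank r, is μ-incoherent with μ = 1 (each row of the eigenvector matrix has norm √(r/n)), and there exists a matrix S with at most n/r nonzero entries per row and column (i.e., fraction α = 1/r) such that L + S has rank r − 1. -/
/-!
Write `m = n / r` and let `B` be the `n × r` indicator matrix of the blocks, `B i t = 1` iff row `i`
lies in block `t`. Then `L = B Bᵀ` and `Bᵀ B = m • 1`, so `L` has rank `r` and `U = m^{-1/2} B`,
`D = m` is an orthonormal eigendecomposition whose rows all have squared norm `1 / m = r / n`.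
Taking `S` to be minus the first block gives `L + S = B' B'ᵀ`, where `B'` is `B` with its first
column removed, hence rank `r - 1`; the support of `S` is one `m × m` block.
-/

open Matrix Finset

lemma card_filter_div_eq {n m k : ℕ} (hm : 0 < m) (hk : (k + 1) * m ≤ n) :
    #{i : Fin n | i.val / m = k} = m := by
  have h : ({i : Fin n | i.val / m = k} : Finset _).map Fin.valEmbedding
      = Ico (k * m) ((k + 1) * m) := by
    ext x
    simp only [mem_map, mem_filter, mem_univ, true_and, Fin.valEmbedding_apply, mem_Ico]
    constructor
    · rintro ⟨i, rfl, rfl⟩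
      exact ⟨Nat.div_mul_le_self _ _, Nat.lt_mul_of_div_lt (Nat.lt_succ_self _) hm⟩
    · rintro ⟨h1, h2⟩
      exact ⟨⟨x, h2.trans_le hk⟩, Nat.div_eq_of_lt_le h1 h2, rfl⟩
  rw [← card_map, h, Nat.card_Ico, add_one_mul, Nat.add_sub_cancel_left]

lemma ncard_le_of_forall_div_eq {n m k : ℕ} (hm : 0 < m) (hk : (k + 1) * m ≤ n)
    {s : Set (Fin n)} (hs : ∀ i ∈ s, i.val / m = k) : s.ncard ≤ m := by
  calc s.ncard ≤ (({i : Fin n | i.val / m = k} : Finset _) : Set (Fin n)).ncard :=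
        Set.ncard_le_ncard fun i hi => by simpa using hs i hi
    _ = m := by rw [Set.ncard_coe_finset, card_filter_div_eq hm hk]

section BlockIndicator

variable {R : Type*} {n q m : ℕ} {a : Fin q → ℕ}

variable (R n m a) in
def blockIndicator [Zero R] [One R] : Matrix (Fin n) (Fin q) R :=
  of fun i t => if i.val / m = a t then 1 else 0

lemma blockIndicator_transpose_mul_self [Semiring R] (hm : 0 < m) (ha : Function.Injective a)
    (hblocks : ∀ t, (a t + 1) * m ≤ n) :
    (blockIndicator R n m a)ᵀ * blockIndicator R n m a = (m : R) • 1 := by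
  ext s t
  simp only [blockIndicator, mul_apply, transpose_apply, of_apply, ← ite_and,
    sum_boole, Matrix.smul_apply, one_apply, smul_eq_mul, mul_ite, mul_one, mul_zero]
  by_cases hst : s = t
  · subst hst
    simp [card_filter_div_eq hm (hblocks s)]
  · have : ∀ i : Fin n, ¬(i.val / m = a t ∧ i.val / m = a s) := fun i h =>
      hst (ha (h.2.symm.trans h.1))
    simp [hst, this]

lemma blockIndicator_mul_transpose_apply [Semiring R] (ha : Function.Injective a) (i j : Fin n) :
    (blockIndicator R n m a * (blockIndicator R n m a)ᵀ) i j =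
      if i.val / m = j.val / m ∧ ∃ t, a t = i.val / m then 1 else 0 := by
  simp only [blockIndicator, mul_apply, transpose_apply, of_apply, mul_boole, ← ite_and]
  split_ifs with h
  · obtain ⟨hij, t₀, ht₀⟩ := h
    rw [sum_eq_single t₀ (fun t _ ht => if_neg fun h => ht (ha (h.2.symm.trans ht₀.symm)))
      (by simp)]
    simp [ht₀, hij]
  · exact sum_eq_zero fun t _ => if_neg fun h' => h ⟨h'.2.trans h'.1.symm, t, h'.2.symm⟩

lemma rank_blockIndicator_mul_transpose [Field R] [LinearOrder R] [IsStrictOrderedRing R]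
    (hm : 0 < m) (ha : Function.Injective a) (hblocks : ∀ t, (a t + 1) * m ≤ n) :
    (blockIndicator R n m a * (blockIndicator R n m a)ᵀ).rank = q := by
  rw [rank_self_mul_transpose, ← rank_transpose_mul_self,
    blockIndicator_transpose_mul_self hm ha hblocks,
    rank_smul_of_mem_nonZeroDivisors _ (mem_nonZeroDivisors_of_ne_zero (by positivity)),
    rank_one, Fintype.card_fin]

end BlockIndicator

section Normalization

variable {ι κ : Type*} {c : ℝ}

lemma inv_sqrt_mul_inv_sqrt (hc : 0 ≤ c) : (√c)⁻¹ * (√c)⁻¹ = c⁻¹ := by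
  rw [← mul_inv, Real.mul_self_sqrt hc]

lemma transpose_mul_self_inv_sqrt_smul [Fintype ι] [DecidableEq κ] {B : Matrix ι κ ℝ}
    (hc : 0 < c) (hB : Bᵀ * B = c • 1) : ((√c)⁻¹ • B)ᵀ * ((√c)⁻¹ • B) = 1 := by
  rw [transpose_smul, Matrix.smul_mul, Matrix.mul_smul, hB, smul_smul, smul_smul,
    inv_sqrt_mul_inv_sqrt hc.le, inv_mul_cancel₀ hc.ne', one_smul]

lemma inv_sqrt_smul_mul_diagonal_mul_transpose [Fintype κ] [DecidableEq κ] (hc : 0 < c)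
    (B : Matrix ι κ ℝ) :
    ((√c)⁻¹ • B) * diagonal (fun _ : κ => c) * ((√c)⁻¹ • B)ᵀ = B * Bᵀ := by
  have hdiag : diagonal (fun _ : κ => c) = c • (1 : Matrix κ κ ℝ) := (smul_one_eq_diagonal c).symm
  rw [hdiag, Matrix.mul_smul, Matrix.mul_one, transpose_smul, Matrix.smul_mul, Matrix.smul_mul,
    Matrix.mul_smul, smul_smul, smul_smul, mul_assoc, inv_sqrt_mul_inv_sqrt hc.le,
    mul_inv_cancel₀ hc.ne', one_smul]

lemma sum_sq_inv_sqrt_smul_apply [Fintype κ] (hc : 0 ≤ c) (B : Matrix ι κ ℝ) (i : ι) :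
    ∑ k, ((√c)⁻¹ • B) i k ^ 2 = c⁻¹ * (B * Bᵀ) i i := by
  calc ∑ k, ((√c)⁻¹ • B) i k ^ 2 = (((√c)⁻¹ • B) * ((√c)⁻¹ • B)ᵀ) i i := by
        simp only [mul_apply, transpose_apply, sq]
    _ = c⁻¹ * (B * Bᵀ) i i := by
        rw [transpose_smul, Matrix.smul_mul, Matrix.mul_smul, smul_smul,
          inv_sqrt_mul_inv_sqrt hc, Matrix.smul_apply, smul_eq_mul]

end Normalization

section BlockOnes

variable {R : Type*} [Ring R] {r m : ℕ}

lemma Fin.val_div_lt_of_mul (i : Fin (r * m)) : i.val / m < r :=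
  Nat.div_lt_of_lt_mul (mul_comm r m ▸ i.isLt)

lemma injective_fin_val_add_one : Function.Injective fun t : Fin r => t.val + 1 :=
  fun _ _ h => Fin.ext (by simpa using h)

lemma exists_fin_pred_add_one_eq_iff {k : ℕ} (hk : k < r) :
    (∃ t : Fin (r - 1), t.val + 1 = k) ↔ k ≠ 0 :=
  ⟨fun ⟨t, ht⟩ => by omega, fun hk0 => ⟨⟨k - 1, by omega⟩, by simp only; omega⟩⟩

variable (R r m)

def blockOnes : Matrix (Fin (r * m)) (Fin (r * m)) R :=
  of fun i j => if i.val / m = j.val / m then 1 else 0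

def firstBlockOnes : Matrix (Fin (r * m)) (Fin (r * m)) R :=
  of fun i j => if i.val / m = 0 ∧ j.val / m = 0 then 1 else 0

lemma blockIndicator_mul_transpose_eq_blockOnes :
    blockIndicator R (r * m) m (Fin.val : Fin r → ℕ) *
      (blockIndicator R (r * m) m (Fin.val : Fin r → ℕ))ᵀ = blockOnes R r m := by
  ext i j
  rw [blockIndicator_mul_transpose_apply Fin.val_injective]
  simp only [show ∃ t : Fin r, t.val = i.val / m from ⟨⟨_, i.val_div_lt_of_mul⟩, rfl⟩, and_true,
    blockOnes, of_apply]

lemma blockIndicator_mul_transpose_eq_blockOnes_sub_firstBlockOnes :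
    blockIndicator R (r * m) m (fun t : Fin (r - 1) => t.val + 1) *
      (blockIndicator R (r * m) m (fun t : Fin (r - 1) => t.val + 1))ᵀ =
      blockOnes R r m - firstBlockOnes R r m := by
  ext i j
  rw [blockIndicator_mul_transpose_apply injective_fin_val_add_one]
  simp only [exists_fin_pred_add_one_eq_iff i.val_div_lt_of_mul, blockOnes, firstBlockOnes,
    Matrix.sub_apply, of_apply]
  split_ifs <;> grind

end BlockOnes

/-- Tightness example: the `n × n` block-diagonal matrix `L` with `r` diagonal
blocks equal to the `(n/r) × (n/r)` all-ones matrix has rank `r`, is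
`1`-incoherent (it admits an eigendecomposition `L = U Σ Uᵀ` with orthonormal
columns whose rows all have Euclidean norm `√r/√n`), and there is a matrix `S`
with at most `n/r` nonzero entries per row and per column (sparsity fraction
`1/r`) such that `L + S` has rank `r − 1`. -/
theorem tightness_example (n r : ℕ) (hr : 1 ≤ r) (hrn : r ≤ n) (hdvd : r ∣ n)
    (L : Matrix (Fin n) (Fin n) ℝ)
    (hL : ∀ i j : Fin n, L i j = if i.val / (n / r) = j.val / (n / r) then 1 else 0) :
    L.rank = r ∧
    (∃ (U : Matrix (Fin n) (Fin r) ℝ) (D : Fin r → ℝ),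
      L = U * Matrix.diagonal D * Uᵀ ∧ Uᵀ * U = 1 ∧
      ∀ i : Fin n, Real.sqrt (∑ k, (U i k) ^ 2) = Real.sqrt r / Real.sqrt n) ∧
    (∃ S : Matrix (Fin n) (Fin n) ℝ,
      (∀ i, ({j | S i j ≠ 0} : Set (Fin n)).ncard ≤ n / r) ∧
      (∀ j, ({i | S i j ≠ 0} : Set (Fin n)).ncard ≤ n / r) ∧
      (L + S).rank = r - 1) := by
  obtain ⟨m, rfl⟩ := hdvd
  have hm : 0 < m := Nat.pos_of_mul_pos_left (by omega : 0 < r * m)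
  rw [Nat.mul_div_cancel_left m hr] at hL ⊢
  obtain rfl : L = blockOnes ℝ r m := ext hL
  have hfits {k : ℕ} (hk : k < r) : (k + 1) * m ≤ r * m := Nat.mul_le_mul_right m hk
  set B := blockIndicator ℝ (r * m) m (Fin.val : Fin r → ℕ)
  have hB : Bᵀ * B = (m : ℝ) • 1 :=
    blockIndicator_transpose_mul_self hm Fin.val_injective fun t => hfits t.isLt
  have hm' : (0 : ℝ) < m := by exact_mod_cast hm
  refine ⟨?_, ⟨(√m)⁻¹ • B, fun _ => m, ?_, transpose_mul_self_inv_sqrt_smul hm' hB, fun i => ?_⟩,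
    ⟨-firstBlockOnes ℝ r m, fun i => ?_, fun j => ?_, ?_⟩⟩
  · rw [← blockIndicator_mul_transpose_eq_blockOnes,
      rank_blockIndicator_mul_transpose hm Fin.val_injective fun t => hfits t.isLt]
  · rw [inv_sqrt_smul_mul_diagonal_mul_transpose hm', blockIndicator_mul_transpose_eq_blockOnes]
  · rw [sum_sq_inv_sqrt_smul_apply hm'.le, blockIndicator_mul_transpose_eq_blockOnes, hL,
      if_pos rfl, mul_one, Real.sqrt_inv, Nat.cast_mul, Real.sqrt_mul (Nat.cast_nonneg r),
      div_mul_cancel_left₀ (by positivity)]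
  · refine ncard_le_of_forall_div_eq hm (hfits hr) fun j hj => by_contra fun h => hj ?_
    rw [neg_apply, neg_eq_zero]
    exact if_neg fun h' => h h'.2
  · refine ncard_le_of_forall_div_eq hm (hfits hr) fun i hi => by_contra fun h => hi ?_
    rw [neg_apply, neg_eq_zero]
    exact if_neg fun h' => h h'.1
  · rw [← sub_eq_add_neg, ← blockIndicator_mul_transpose_eq_blockOnes_sub_firstBlockOnes,
      rank_blockIndicator_mul_transpose hm injective_fin_val_add_one fun t => hfits (by omega)]
end
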